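/- Assume additionally (Monotonicity) W1 ≥ W0 P-almost surely and (Relevance) E[W | Z = 1] ≠ E[W | Z = 0]. Then P(C) > 0, and for every y ∈ ℝ the D-IV-LATE is identified by the Wald-type ratio: P(Y1 ≤ y | C) − P(Y0 ≤ y | C) = (E[1{Y ≤ y} | Z = 1] − E[1{Y ≤ y} | Z = 0]) / (E[W | Z = 1] − E[W | Z = 0]), where P(· | C) := P(· ∩ C)/P(C). -/

import Mathlib

/-!
On `{Z = z}` the observed treatment is `W_z`, and by independence of `Z` from the potential
variables, conditioning on `{Z = z}` does not change the law of `(W_z, Y0, Y1)`. Hence the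
intent-to-treat contrast of any event `{(W, Y0, Y1) ∈ S}` equals
`P((W1, Y0, Y1) ∈ S) - P((W0, Y0, Y1) ∈ S)`. By monotonicity `W0 = W1` a.s. off the compliers,
while on the compliers `W0 = 0` and `W1 = 1`, so this difference is
`P({(1, Y0, Y1) ∈ S} ∩ C) - P({(0, Y0, Y1) ∈ S} ∩ C)`. For `S = {w = 1}` this gives `P(C)` as the
denominator, and relevance makes it nonzero; for `S = {Y ≤ y}` it gives the numerator.
-/

open MeasureTheory ProbabilityTheory Set

/-- Conditional mean given an event: `E[U | A] := E[U · 1_A] / P(A)`. -/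
noncomputable def condMean {Ω : Type*} [MeasurableSpace Ω] (P : Measure Ω)
    (U : Ω → ℝ) (A : Set Ω) : ℝ :=
  (∫ ω in A, U ω ∂P) / (P A).toReal

section condMean

variable {Ω : Type*} [MeasurableSpace Ω] {P : Measure Ω} {U : Ω → ℝ} {A B : Set Ω}

lemma condMean_congr {U' : Ω → ℝ} (hA : MeasurableSet A) (h : EqOn U U' A) :
    condMean P U A = condMean P U' A := by
  rw [condMean, condMean, setIntegral_congr_fun hA h]

lemma condMean_indicator_one_of_measure_inter_eq_mul [IsFiniteMeasure P]
    (hB : MeasurableSet B) (hPA : P A ≠ 0) (hAB : P (A ∩ B) = P A * P B) :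
    condMean P (B.indicator 1) A = P.real B := by
  have hBA : P.real (B ∩ A) = P.real A * P.real B := by
    rw [inter_comm, measureReal_def, hAB, ENNReal.toReal_mul]; rfl
  rw [condMean, integral_indicator_one hB, measureReal_restrict_apply hB, hBA]
  exact mul_div_cancel_left₀ _ ((measureReal_ne_zero_iff (measure_ne_top P A)).2 hPA)

end condMean

lemma ProbabilityTheory.IndepFun.condMean_eq_measureReal {Ω β γ : Type*} [MeasurableSpace Ω]
    [MeasurableSpace β] [MeasurableSingletonClass β] [MeasurableSpace γ]
    {P : Measure Ω} [IsFiniteMeasure P] {Z : Ω → β} {V : Ω → γ} (hind : IndepFun Z V P)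
    (hZ : Measurable Z) (hV : Measurable V) {z : β} (hz : P (Z ⁻¹' {z}) ≠ 0)
    {S : Set γ} (hS : MeasurableSet S) {U : Ω → ℝ}
    (hU : ∀ ω, Z ω = z → U ω = (V ⁻¹' S).indicator 1 ω) :
    condMean P U (Z ⁻¹' {z}) = P.real (V ⁻¹' S) := by
  have hZz : MeasurableSet (Z ⁻¹' {z}) := hZ (measurableSet_singleton z)
  rw [condMean_congr hZz hU, condMean_indicator_one_of_measure_inter_eq_mul (hV hS) hz
    (hind.measure_inter_preimage_eq_mul _ _ (measurableSet_singleton z) hS)]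

lemma measureReal_sub_measureReal_eq_of_diff_ae_eq {Ω : Type*} [MeasurableSpace Ω]
    {P : Measure Ω} [IsFiniteMeasure P] {E E' C : Set Ω} (hC : MeasurableSet C)
    (h : (E \ C : Set Ω) =ᵐ[P] (E' \ C : Set Ω)) :
    P.real E - P.real E' = P.real (E ∩ C) - P.real (E' ∩ C) := by
  rw [← measureReal_inter_add_sdiff (s := E) hC, ← measureReal_inter_add_sdiff (s := E') hC,
    measureReal_congr h]
  ring

lemma eq_zero_and_eq_one_of_lt {a b : ℝ} (ha : a = 0 ∨ a = 1) (hb : b = 0 ∨ b = 1)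
    (h : a < b) : a = 0 ∧ b = 1 := by
  rcases ha with rfl | rfl <;> rcases hb with rfl | rfl <;> norm_num at *

lemma itt_contrast_eq_complier_contrast {Ω : Type*} [MeasurableSpace Ω] {P : Measure Ω}
    [IsFiniteMeasure P] {Z W0 W1 Y0 Y1 W : Ω → ℝ}
    (hZ : Measurable Z) (hW0 : Measurable W0) (hW1 : Measurable W1)
    (hY0 : Measurable Y0) (hY1 : Measurable Y1)
    (hW0bin : ∀ ω, W0 ω = 0 ∨ W0 ω = 1) (hW1bin : ∀ ω, W1 ω = 0 ∨ W1 ω = 1)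
    (hW_of_one : ∀ ω, Z ω = 1 → W ω = W1 ω) (hW_of_zero : ∀ ω, Z ω = 0 → W ω = W0 ω)
    (hindep : IndepFun Z (fun ω => (Y0 ω, Y1 ω, W0 ω, W1 ω)) P)
    (hmono : ∀ᵐ ω ∂P, W0 ω ≤ W1 ω)
    (hZ1 : P {ω | Z ω = 1} ≠ 0) (hZ0 : P {ω | Z ω = 0} ≠ 0)
    (S : Set (ℝ × ℝ × ℝ)) (hS : MeasurableSet S) {U : Ω → ℝ}
    (hU : ∀ ω, U ω = {ω' | (W ω', Y0 ω', Y1 ω') ∈ S}.indicator 1 ω) :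
    condMean P U {ω | Z ω = 1} - condMean P U {ω | Z ω = 0}
      = P.real ({ω | ((1 : ℝ), Y0 ω, Y1 ω) ∈ S} ∩ {ω | W0 ω < W1 ω})
        - P.real ({ω | ((0 : ℝ), Y0 ω, Y1 ω) ∈ S} ∩ {ω | W0 ω < W1 ω}) := by
  have hV : Measurable fun ω => (Y0 ω, Y1 ω, W0 ω, W1 ω) := by fun_prop
  have hC : MeasurableSet {ω | W0 ω < W1 ω} := measurableSet_lt hW0 hW1
  have h1 : condMean P U {ω | Z ω = 1} = P.real {ω | (W1 ω, Y0 ω, Y1 ω) ∈ S} :=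
    hindep.condMean_eq_measureReal hZ hV hZ1 ((by fun_prop :
      Measurable fun v : ℝ × ℝ × ℝ × ℝ => (v.2.2.2, v.1, v.2.1)) hS)
      fun ω hω => by
        classical simp only [hU, indicator_apply, mem_preimage, mem_ofPred_eq, hW_of_one ω hω]
  have h0 : condMean P U {ω | Z ω = 0} = P.real {ω | (W0 ω, Y0 ω, Y1 ω) ∈ S} :=
    hindep.condMean_eq_measureReal hZ hV hZ0 ((by fun_prop :
      Measurable fun v : ℝ × ℝ × ℝ × ℝ => (v.2.2.1, v.1, v.2.1)) hS)
      fun ω hω => by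
        classical simp only [hU, indicator_apply, mem_preimage, mem_ofPred_eq, hW_of_zero ω hω]
  rw [h1, h0, measureReal_sub_measureReal_eq_of_diff_ae_eq hC]
  · congr 2 <;> ext ω <;> simp only [mem_inter_iff, mem_ofPred_eq] <;>
      refine and_congr_left fun hlt => ?_
    · rw [(eq_zero_and_eq_one_of_lt (hW0bin ω) (hW1bin ω) hlt).2]
    · rw [(eq_zero_and_eq_one_of_lt (hW0bin ω) (hW1bin ω) hlt).1]
  · filter_upwards [hmono] with ω hω
    refine propext (and_congr_left fun hlt => ?_)
    simp only [mem_ofPred_eq, le_antisymm hω (not_lt.1 hlt)]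

/-- Under monotonicity and relevance, `P(C) > 0` and the D-IV-LATE is identified by the
Wald-type ratio of intent-to-treat contrasts. -/
theorem d_iv_late_wald_identification
    {Ω : Type*} [MeasurableSpace Ω] (P : Measure Ω) [IsProbabilityMeasure P]
    (Z W0 W1 Y0 Y1 : Ω → ℝ)
    (hZ : Measurable Z) (hW0 : Measurable W0) (hW1 : Measurable W1)
    (hY0 : Measurable Y0) (hY1 : Measurable Y1)
    (hZbin : ∀ ω, Z ω = 0 ∨ Z ω = 1)
    (hW0bin : ∀ ω, W0 ω = 0 ∨ W0 ω = 1)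
    (hW1bin : ∀ ω, W1 ω = 0 ∨ W1 ω = 1)
    (W Y : Ω → ℝ)
    (hWdef : ∀ ω, W ω = Z ω * W1 ω + (1 - Z ω) * W0 ω)
    (hYdef : ∀ ω, Y ω = W ω * Y1 ω + (1 - W ω) * Y0 ω)
    (hindep : IndepFun Z (fun ω => (Y0 ω, Y1 ω, W0 ω, W1 ω)) P)
    (hoverlap : 0 < P {ω | Z ω = 1} ∧ P {ω | Z ω = 1} < 1)
    (hmono : ∀ᵐ ω ∂P, W0 ω ≤ W1 ω)
    (hrel : condMean P W {ω | Z ω = 1} ≠ condMean P W {ω | Z ω = 0}) :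
    0 < P {ω | W0 ω < W1 ω} ∧
    ∀ y : ℝ,
      (P ({ω | Y1 ω ≤ y} ∩ {ω | W0 ω < W1 ω})).toReal / (P {ω | W0 ω < W1 ω}).toReal
        - (P ({ω | Y0 ω ≤ y} ∩ {ω | W0 ω < W1 ω})).toReal / (P {ω | W0 ω < W1 ω}).toReal
      = (condMean P (fun ω => if Y ω ≤ y then (1 : ℝ) else 0) {ω | Z ω = 1}
          - condMean P (fun ω => if Y ω ≤ y then (1 : ℝ) else 0) {ω | Z ω = 0})
        / (condMean P W {ω | Z ω = 1} - condMean P W {ω | Z ω = 0}) := by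
  have hZ0 : P {ω | Z ω = 0} ≠ 0 := by
    have hcompl : {ω | Z ω = 0} = {ω | Z ω = 1}ᶜ := by
      ext ω; rcases hZbin ω with h | h <;> simp [h]
    rw [hcompl, prob_compl_eq_one_sub (measurableSet_eq_fun hZ measurable_const)]
    exact (tsub_pos_of_lt hoverlap.2).ne'
  have hW_of_one (ω) (h : Z ω = 1) : W ω = W1 ω := by rw [hWdef, h]; ring
  have hW_of_zero (ω) (h : Z ω = 0) : W ω = W0 ω := by rw [hWdef, h]; ring
  have contrast := itt_contrast_eq_complier_contrast hZ hW0 hW1 hY0 hY1 hW0bin hW1bin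
    hW_of_one hW_of_zero hindep hmono hoverlap.1.ne' hZ0
  have hden : condMean P W {ω | Z ω = 1} - condMean P W {ω | Z ω = 0}
      = P.real {ω | W0 ω < W1 ω} := by
    have hWbin (ω) : W ω = 0 ∨ W ω = 1 := by
      rcases hZbin ω with h | h
      · rw [hW_of_zero ω h]; exact hW0bin ω
      · rw [hW_of_one ω h]; exact hW1bin ω
    rw [contrast {p | p.1 = 1} (measurableSet_eq_fun measurable_fst measurable_const)
      fun ω => by rcases hWbin ω with h | h <;> simp [h]]
    simp
  have hPC : 0 < P {ω | W0 ω < W1 ω} :=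
    pos_iff_ne_zero.2 fun h => hrel (sub_eq_zero.1 (hden.trans (by simp [measureReal_def, h])))
  refine ⟨hPC, fun y => ?_⟩
  have hnum := contrast {p | p.1 * p.2.2 + (1 - p.1) * p.2.1 ≤ y}
    (measurableSet_le (by fun_prop) measurable_const)
    (U := fun ω => if Y ω ≤ y then (1 : ℝ) else 0) fun ω => by simp [indicator_apply, hYdef]
  simp only [mem_ofPred_eq, one_mul, sub_self, zero_mul, add_zero, zero_add, sub_zero] at hnum
  rw [hnum, hden, sub_div]
  rfl
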